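/- (Squared norm of D in an adapted frame.) Let m ≥ 3, let R = (R_ij) be symmetric with S = R_tt, and let f satisfy the adapted-frame condition (for an arbitrary real number w). Then Σ_{i,j,k} (D_ijk)² = (2 w² / (m−2)²) [ Σ_{i,j} (R_ij)² − (m/(m−1)) Σ_i (R_im)² − S²/(m−1) + (2/(m−1)) S R_mm ]. -/
import Mathlib


open Finset

/-- Kronecker delta. -/
noncomputable def kdelta {m : ℕ} (i j : Fin m) : ℝ := if i = j then 1 else 0

/-- The 3-tensor `D` built from the Ricci components `R` and the gradient components `f`. -/
noncomputable def Dt (m : ℕ) (R : Fin m → Fin m → ℝ) (f : Fin m → ℝ)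
    (i j k : Fin m) : ℝ :=
  (1 / ((m : ℝ) - 2)) * (f k * R i j - f j * R i k)
  + (1 / (((m : ℝ) - 1) * ((m : ℝ) - 2))) *
      ∑ t, f t * (R t k * kdelta i j - R t j * kdelta i k)
  - ((∑ t, R t t) / (((m : ℝ) - 1) * ((m : ℝ) - 2))) *
      (f k * kdelta i j - f j * kdelta i k)

@[simp] lemma kdelta_self {m : ℕ} (i : Fin m) : kdelta i i = 1 := by simp [kdelta]

lemma ksum1 {m : ℕ} (e : Fin m) (g : Fin m → ℝ) : ∑ k, kdelta k e * g k = g e := by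
  simp [kdelta, ite_mul]

lemma ksum2 {m : ℕ} (i : Fin m) (g : Fin m → ℝ) : ∑ k, kdelta i k * g k = g i := by
  simp [kdelta, ite_mul]

lemma sumk {m : ℕ} (R : Fin m → Fin m → ℝ) (e i : Fin m) (c1 c2 c3 c4 : ℝ) :
    ∑ k, (c1 * kdelta k e + c2 * R e k + c3 * R i k + c4 * kdelta i k) ^ 2
    = c1 ^ 2 + c4 ^ 2 + 2 * c1 * c4 * kdelta i e
      + c2 ^ 2 * (∑ k, (R e k) ^ 2) + c3 ^ 2 * (∑ k, (R i k) ^ 2)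
      + 2 * c1 * c2 * R e e + 2 * c1 * c3 * R i e
      + 2 * c2 * c3 * (∑ k, R e k * R i k) + 2 * c2 * c4 * R e i + 2 * c3 * c4 * R i i := by
  have h : ∀ k, (c1 * kdelta k e + c2 * R e k + c3 * R i k + c4 * kdelta i k) ^ 2
      = kdelta k e * (c1 ^ 2 * kdelta k e + 2 * c1 * c2 * R e k + 2 * c1 * c3 * R i k
            + 2 * c1 * c4 * kdelta i k)
        + kdelta i k * (c4 ^ 2 * kdelta i k + 2 * c2 * c4 * R e k + 2 * c3 * c4 * R i k)
        + (c2 ^ 2 * (R e k) ^ 2 + c3 ^ 2 * (R i k) ^ 2 + 2 * c2 * c3 * (R e k * R i k)) := by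
    intro k; ring
  simp only [h]
  rw [Finset.sum_add_distrib, Finset.sum_add_distrib, ksum1, ksum2,
    Finset.sum_add_distrib, Finset.sum_add_distrib,
    ← Finset.mul_sum, ← Finset.mul_sum, ← Finset.mul_sum]
  simp only [kdelta_self]
  ring

set_option maxHeartbeats 2000000 in
/-- squared norm of `D` in an adapted frame (with `f_a = 0` for `a ≠ e`
and `f_e = w`, `w` an arbitrary real number), in terms of the Ricci components. -/
theorem D_norm_sq_adapted_frame (m : ℕ) (hm : 3 ≤ m)
    (R : Fin m → Fin m → ℝ) (hR : ∀ i j, R i j = R j i)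
    (f : Fin m → ℝ) (e : Fin m) (w : ℝ)
    (hfa : ∀ a, a ≠ e → f a = 0) (hfe : f e = w) :
    ∑ i, ∑ j, ∑ k, (Dt m R f i j k) ^ 2
      = (2 * w ^ 2 / ((m : ℝ) - 2) ^ 2) *
          ((∑ i, ∑ j, (R i j) ^ 2)
            - ((m : ℝ) / ((m : ℝ) - 1)) * ∑ i, (R i e) ^ 2
            - (∑ t, R t t) ^ 2 / ((m : ℝ) - 1)
            + (2 / ((m : ℝ) - 1)) * (∑ t, R t t) * R e e) := by
  have hm' : (3 : ℝ) ≤ (m : ℝ) := by exact_mod_cast hm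
  have hm1 : ((m : ℝ) - 1) ≠ 0 := by nlinarith
  have hm2 : ((m : ℝ) - 2) ≠ 0 := by nlinarith
  set S := ∑ t, R t t with hS
  set α := w / ((m : ℝ) - 2) with hα
  set β := w / (((m : ℝ) - 1) * ((m : ℝ) - 2)) with hβ
  set γ := -(S * w) / (((m : ℝ) - 1) * ((m : ℝ) - 2)) with hγ
  have hf : ∀ t, f t = w * kdelta t e := by
    intro t
    by_cases h : t = e
    · subst h; simp [kdelta, hfe]
    · simp [kdelta, h, hfa t h]
  have hD : ∀ i j k, Dt m R f i j k
      = (α * R i j + γ * kdelta i j) * kdelta k e + (β * kdelta i j) * R e k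
        + (-(α * kdelta j e)) * R i k + (-(β * R e j + γ * kdelta j e)) * kdelta i k := by
    intro i j k
    unfold Dt
    simp only [hf]
    rw [show (∑ t, (w * kdelta t e) * (R t k * kdelta i j - R t j * kdelta i k))
        = ∑ t, kdelta t e * (w * (R t k * kdelta i j - R t j * kdelta i k)) from
        Finset.sum_congr rfl (fun t _ => by ring), ksum1, ← hS, hα, hβ, hγ]
    field_simp
    ring
  simp only [hD, sumk]
  -- now goal: ∑ i, ∑ j, E i j = RHS
  have hj : ∀ i : Fin m, (∑ j,
      ((α * R i j + γ * kdelta i j) ^ 2 + (-(β * R e j + γ * kdelta j e)) ^ 2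
        + 2 * (α * R i j + γ * kdelta i j) * (-(β * R e j + γ * kdelta j e)) * kdelta i e
        + (β * kdelta i j) ^ 2 * (∑ k, (R e k) ^ 2)
        + (-(α * kdelta j e)) ^ 2 * (∑ k, (R i k) ^ 2)
        + 2 * (α * R i j + γ * kdelta i j) * (β * kdelta i j) * R e e
        + 2 * (α * R i j + γ * kdelta i j) * (-(α * kdelta j e)) * R i e
        + 2 * (β * kdelta i j) * (-(α * kdelta j e)) * (∑ k, R e k * R i k)
        + 2 * (β * kdelta i j) * (-(β * R e j + γ * kdelta j e)) * R e i
        + 2 * (-(α * kdelta j e)) * (-(β * R e j + γ * kdelta j e)) * R i i))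
      = kdelta i e * (-(4 * α * γ) * R i e - 4 * β * γ * R e i
            - 4 * α * β * (∑ k, R e k * R i k) - 2 * γ ^ 2 * kdelta i e)
        + (2 * α ^ 2 * (∑ k, (R i k) ^ 2)
            + (2 * β ^ 2 * (∑ k, (R e k) ^ 2) + 2 * γ ^ 2 + 4 * β * γ * R e e)
            + (-(2 * α ^ 2)) * (R i e) ^ 2 + (-(2 * β ^ 2)) * (R e i) ^ 2
            + (4 * α * γ + 4 * α * β * R e e) * R i i) := by
    intro i
    have hsplit : ∀ j : Fin m,
        ((α * R i j + γ * kdelta i j) ^ 2 + (-(β * R e j + γ * kdelta j e)) ^ 2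
          + 2 * (α * R i j + γ * kdelta i j) * (-(β * R e j + γ * kdelta j e)) * kdelta i e
          + (β * kdelta i j) ^ 2 * (∑ k, (R e k) ^ 2)
          + (-(α * kdelta j e)) ^ 2 * (∑ k, (R i k) ^ 2)
          + 2 * (α * R i j + γ * kdelta i j) * (β * kdelta i j) * R e e
          + 2 * (α * R i j + γ * kdelta i j) * (-(α * kdelta j e)) * R i e
          + 2 * (β * kdelta i j) * (-(α * kdelta j e)) * (∑ k, R e k * R i k)
          + 2 * (β * kdelta i j) * (-(β * R e j + γ * kdelta j e)) * R e i
          + 2 * (-(α * kdelta j e)) * (-(β * R e j + γ * kdelta j e)) * R i i)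
        = kdelta i j * (2 * α * γ * R i j + γ ^ 2 * kdelta i j
              - 2 * β * γ * R e j * kdelta i e - 2 * γ ^ 2 * kdelta j e * kdelta i e
              + β ^ 2 * kdelta i j * (∑ k, (R e k) ^ 2)
              + 2 * α * β * R i j * R e e + 2 * β * γ * kdelta i j * R e e
              - 2 * α * γ * kdelta j e * R i e
              - 2 * α * β * kdelta j e * (∑ k, R e k * R i k)
              - 2 * β ^ 2 * R e j * R e i - 2 * β * γ * kdelta j e * R e i)
          + kdelta j e * (2 * β * γ * R e j + γ ^ 2 * kdelta j e
              - 2 * α * γ * R i j * kdelta i e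
              + α ^ 2 * kdelta j e * (∑ k, (R i k) ^ 2)
              - 2 * α ^ 2 * R i j * R i e
              + 2 * α * β * R e j * R i i + 2 * α * γ * kdelta j e * R i i)
          + (α ^ 2 * (R i j) ^ 2 + β ^ 2 * (R e j) ^ 2
              - 2 * α * β * kdelta i e * (R e j * R i j)) := by
      intro j; ring
    simp only [hsplit]
    rw [Finset.sum_add_distrib, Finset.sum_add_distrib, ksum2, ksum1,
      Finset.sum_sub_distrib, Finset.sum_add_distrib,
      ← Finset.mul_sum, ← Finset.mul_sum, ← Finset.mul_sum]
    simp only [kdelta_self]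
    have h1 : (∑ j, R e j * R i j) = ∑ k, R e k * R i k := rfl
    rw [h1]
    ring
  simp only [hj]
  rw [Finset.sum_add_distrib, ksum1,
    Finset.sum_add_distrib, Finset.sum_add_distrib, Finset.sum_add_distrib,
    Finset.sum_add_distrib,
    ← Finset.mul_sum, ← Finset.mul_sum, ← Finset.mul_sum, ← Finset.mul_sum,
    Finset.sum_const, Finset.card_univ, Fintype.card_fin, nsmul_eq_mul]
  simp only [kdelta_self]
  have hMe : (∑ k, R e k * R e k) = ∑ i, (R i e) ^ 2 :=
    Finset.sum_congr rfl fun k _ => by rw [hR e k]; ring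
  have hRei : (∑ i, (R e i) ^ 2) = ∑ i, (R i e) ^ 2 :=
    Finset.sum_congr rfl fun i _ => by rw [hR e i]
  rw [hMe, hRei, ← hS]
  rw [hα, hβ, hγ]
  field_simp
  ring
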